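/- arXiv:2303.05740 — 4 statements merged into one kernel-verified Lean document; each statement's English description precedes it below -/
import Mathlib

section
/- Let q: ℝ^n → ℝ be convex differentiable with coordinate-wise Lipschitz gradient constants L_i, let λ* minimize q, and consider Nesterov's accelerated gradient method: λ^k = λ̂^k − η ⊙ ∇q(λ̂^k) (coordinate-wise step-sizes η_i ∈ (0, 1/L_i]), with extrapolation λ̂^{k+1} = λ^k + ((k+1)(γ^k − k)/(k γ^{k+1}))(λ^k − λ^{k−1}), γ¹ = 1, λ̂¹ = λ⁰, and γ^{k+1} = ((k+1)/2)(1+√(1+4(γ^k/k)²)). Then q(λ^k) − q(λ*) ≤ Σ_i 2(λ_i⁰ − λ_i*)²/(η_i k²) for all k ≥ 1. -/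
/-!
Write `t m = γ m / m`; the recursion for `γ` is the classical momentum recursion
`t' = (1 + √(1 + 4 t²)) / 2`, so `t (m+1) (t (m+1) - 1) = t m ²` and `t m ≥ (m + 1) / 2`.
Convexity and the coordinate-wise descent lemma give, for a gradient step `λ = λ̂ - η ⊙ ∇q(λ̂)`
and every `z`, the three-point inequality `q λ - q z ≤ ½ (‖λ̂ - z‖² - ‖λ - z‖²)` in the norm
weighted by `1/η`. Applied at `z = λᵐ` with weight `t (t - 1)` and at `z = λ*` with weight `t`,
it shows that the energy `t m ² (q λᵐ - q λ*) + ½ ‖t m λᵐ - (t m - 1) λᵐ⁻¹ - λ*‖²` does not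
increase, and at `m = 1` it is at most `½ ‖λ⁰ - λ*‖²`.
-/

open Finset Set

open scoped RealInnerProductSpace

section Gradient

variable {F : Type*} [NormedAddCommGroup F] [InnerProductSpace ℝ F] [CompleteSpace F]
  {q : F → ℝ} {g : F → F}

theorem HasGradientAt.hasDerivAt_comp_add_smul {g' x v : F} {s : ℝ}
    (h : HasGradientAt q g' (x + s • v)) :
    HasDerivAt (fun s : ℝ => q (x + s • v)) ⟪g', v⟫ s := by
  have hline : HasDerivAt (fun s : ℝ => x + s • v) v s := by
    simpa using ((hasDerivAt_id s).smul_const v).const_add x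
  have := h.hasFDerivAt.comp_hasDerivAt s hline
  rwa [InnerProductSpace.toDual_apply_apply] at this

theorem ConvexOn.add_inner_le_of_hasGradientAt (hconv : ConvexOn ℝ univ q) {g' x : F}
    (h : HasGradientAt q g' x) (z : F) : q x + ⟪g', z - x⟫ ≤ q z := by
  have hline : ConvexOn ℝ univ (fun s : ℝ => q (x + s • (z - x))) := by
    simpa [Function.comp_def, AffineMap.lineMap_apply, add_comm]
      using hconv.comp_affineMap (AffineMap.lineMap x z)
  have hderiv : HasDerivAt (fun s : ℝ => q (x + s • (z - x))) ⟪g', z - x⟫ 0 :=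
    HasGradientAt.hasDerivAt_comp_add_smul (by simpa using h)
  have := hline.le_slope_of_hasDerivAt (mem_univ 0) (mem_univ 1) one_pos hderiv
  simp [slope_def_field] at this
  linarith

theorem le_add_inner_add_half_of_inner_sub_le (hg : ∀ z, HasGradientAt q (g z) z) {x v : F}
    {C : ℝ} (hC : ∀ s ∈ Ioo (0 : ℝ) 1, ⟪g (x + s • v) - g x, v⟫ ≤ s * C) :
    q (x + v) ≤ q x + ⟪g x, v⟫ + C / 2 := by
  set ψ : ℝ → ℝ := fun s => q (x + s • v) - s * ⟪g x, v⟫ - s ^ 2 / 2 * C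
  have hψ : ∀ s, HasDerivAt ψ (⟪g (x + s • v), v⟫ - ⟪g x, v⟫ - s * C) s := fun s => by
    have hlin : HasDerivAt (fun s : ℝ => s * ⟪g x, v⟫) ⟪g x, v⟫ s := by
      simpa using (hasDerivAt_id s).mul_const ⟪g x, v⟫
    have hquad : HasDerivAt (fun s : ℝ => s ^ 2 / 2 * C) (s * C) s :=
      (((hasDerivAt_pow 2 s).div_const 2).mul_const C).congr_deriv (by simp)
    exact ((hg _).hasDerivAt_comp_add_smul.sub hlin).sub hquad
  have hanti : AntitoneOn ψ (Icc 0 1) := by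
    refine antitoneOn_of_deriv_nonpos (convex_Icc 0 1)
      (fun s _ => (hψ s).continuousAt.continuousWithinAt)
      (fun s _ => (hψ s).differentiableAt.differentiableWithinAt) fun s hs => ?_
    rw [interior_Icc] at hs
    rw [(hψ s).deriv, ← inner_sub_left]
    linarith [hC s hs]
  have := hanti (left_mem_Icc.2 zero_le_one) (right_mem_Icc.2 zero_le_one) zero_le_one
  simp [ψ] at this
  linarith

end Gradient

section Coordinates

variable {ι : Type*} [Fintype ι] {q : EuclideanSpace ℝ ι → ℝ}
  {g : EuclideanSpace ℝ ι → EuclideanSpace ℝ ι} {L : ι → ℝ}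

theorem EuclideanSpace.real_inner_eq_sum (a b : EuclideanSpace ℝ ι) :
    ⟪a, b⟫ = ∑ i, a i * b i := by
  simp only [PiLp.inner_apply, RCLike.inner_apply, conj_trivial, mul_comm]

theorem inner_sub_le_of_abs_sub_le (hLip : ∀ i a b, |g a i - g b i| ≤ L i * |a i - b i|)
    (x v : EuclideanSpace ℝ ι) {s : ℝ} (hs : 0 ≤ s) :
    ⟪g (x + s • v) - g x, v⟫ ≤ s * ∑ i, L i * v i ^ 2 := by
  rw [EuclideanSpace.real_inner_eq_sum, mul_sum]
  refine sum_le_sum fun i _ => ?_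
  have hi := hLip i (x + s • v) x
  simp only [PiLp.add_apply, PiLp.smul_apply, smul_eq_mul, add_sub_cancel_left, abs_mul,
    abs_of_nonneg hs] at hi
  calc (g (x + s • v) - g x) i * v i ≤ |g (x + s • v) i - g x i| * |v i| := by
        rw [← abs_mul]; exact le_abs_self _
    _ ≤ L i * (s * |v i|) * |v i| := mul_le_mul_of_nonneg_right hi (abs_nonneg _)
    _ = s * (L i * v i ^ 2) := by rw [← sq_abs (v i)]; ring

theorem le_add_inner_add_sum_of_abs_sub_le (hg : ∀ z, HasGradientAt q (g z) z)
    (hLip : ∀ i a b, |g a i - g b i| ≤ L i * |a i - b i|) (x y : EuclideanSpace ℝ ι) :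
    q y ≤ q x + ⟪g x, y - x⟫ + (∑ i, L i * (y i - x i) ^ 2) / 2 := by
  have := le_add_inner_add_half_of_inner_sub_le hg (x := x) (v := y - x)
    fun s hs => inner_sub_le_of_abs_sub_le hLip x (y - x) hs.1.le
  simpa using this

theorem gradient_step_coord_le {η L : ℝ} (hη : 0 < η) (hLη : L * η ≤ 1) (a b c : ℝ) :
    c * (a - η * c - a) - c * (b - a) + L * (a - η * c - a) ^ 2 / 2
      ≤ ((a - b) ^ 2 - (a - η * c - b) ^ 2) / (2 * η) := by
  have hgap : 0 ≤ η * c ^ 2 * (1 - L * η) / 2 := by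
    have := sub_nonneg.2 hLη
    positivity
  rw [← sub_nonneg]
  convert hgap using 1
  field_simp
  ring

theorem sub_le_sum_of_coordinate_gradient_step (hconv : ConvexOn ℝ univ q)
    (hg : ∀ z, HasGradientAt q (g z) z) (hLip : ∀ i a b, |g a i - g b i| ≤ L i * |a i - b i|)
    {η : ι → ℝ} (hη : ∀ i, η i ∈ Ioc 0 (1 / L i)) {xh x : EuclideanSpace ℝ ι}
    (hx : ∀ i, x i = xh i - η i * g xh i) (z : EuclideanSpace ℝ ι) :
    q x - q z ≤ ∑ i, ((xh i - z i) ^ 2 - (x i - z i) ^ 2) / (2 * η i) := by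
  have hdescent := le_add_inner_add_sum_of_abs_sub_le hg hLip xh x
  have htangent := hconv.add_inner_le_of_hasGradientAt (hg xh) z
  rw [EuclideanSpace.real_inner_eq_sum] at hdescent htangent
  suffices ∑ i, (g xh i * (x - xh) i - g xh i * (z - xh) i + L i * (x i - xh i) ^ 2 / 2)
      ≤ ∑ i, ((xh i - z i) ^ 2 - (x i - z i) ^ 2) / (2 * η i) by
    rw [sum_add_distrib, sum_sub_distrib, ← sum_div] at this
    linarith
  refine sum_le_sum fun i _ => ?_
  obtain ⟨hηpos, hηL⟩ := hη i
  have hLη : L i * η i ≤ 1 := by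
    rwa [le_div_iff₀ (one_div_pos.1 (hηpos.trans_le hηL)), mul_comm] at hηL
  simpa only [PiLp.sub_apply, hx i] using gradient_step_coord_le hηpos hLη (xh i) (z i) (g xh i)

end Coordinates

section Momentum

/-- The positive root `t'` of `t' (t' - 1) = t²`. -/
noncomputable def nesterovStep (t : ℝ) : ℝ := (1 + √(1 + 4 * t ^ 2)) / 2

theorem nesterovStep_mul_sub_one (t : ℝ) : nesterovStep t * (nesterovStep t - 1) = t ^ 2 := by
  have := Real.sq_sqrt (show (0 : ℝ) ≤ 1 + 4 * t ^ 2 by positivity)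
  unfold nesterovStep
  linear_combination this / 4

theorem add_half_le_nesterovStep (t : ℝ) : t + 1 / 2 ≤ nesterovStep t := by
  have : 2 * t ≤ √(1 + 4 * t ^ 2) :=
    Real.le_sqrt_of_sq_le (by nlinarith)
  unfold nesterovStep
  linarith

theorem half_succ_le_of_nesterovStep {t : ℕ → ℝ} (h1 : t 1 = 1)
    (hrec : ∀ m, 1 ≤ m → t (m + 1) = nesterovStep (t m)) {m : ℕ} (hm : 1 ≤ m) :
    ((m : ℝ) + 1) / 2 ≤ t m := by
  induction m, hm using Nat.le_induction with
  | base => norm_num [h1]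
  | succ m hm ih =>
    rw [hrec m hm]
    push_cast
    linarith [add_half_le_nesterovStep (t m)]

end Momentum

section Energy

variable {ι : Type*} [Fintype ι] (q : EuclideanSpace ℝ ι → ℝ) (lstar : EuclideanSpace ℝ ι)
  (η : ι → ℝ) (t : ℕ → ℝ) (lam : ℕ → EuclideanSpace ℝ ι) {lamhat : ℕ → EuclideanSpace ℝ ι}

noncomputable def accelEnergy (m : ℕ) : ℝ :=
  t m ^ 2 * (q (lam m) - q lstar) +
    ∑ i, (t m * lam m i - (t m - 1) * lam (m - 1) i - lstar i) ^ 2 / (2 * η i)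

variable {q lstar η t lam}

theorem accelEnergy_succ_le {m : ℕ}
    (hgrad : ∀ z, q (lam (m + 1)) - q z ≤
      ∑ i, ((lamhat (m + 1) i - z i) ^ 2 - (lam (m + 1) i - z i) ^ 2) / (2 * η i))
    (hrec : t (m + 1) = nesterovStep (t m)) (hone : 1 ≤ t (m + 1))
    (hmom : ∀ i, t (m + 1) * lamhat (m + 1) i =
      t (m + 1) * lam m i + (t m - 1) * (lam m i - lam (m - 1) i)) :
    accelEnergy q lstar η t lam (m + 1) ≤ accelEnergy q lstar η t lam m := by
  set b := t (m + 1)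
  have hb : b * (b - 1) = t m ^ 2 := hrec ▸ nesterovStep_mul_sub_one (t m)
  have hprev := mul_le_mul_of_nonneg_left (hgrad (lam m)) (by nlinarith : 0 ≤ b * (b - 1))
  have hstar := mul_le_mul_of_nonneg_left (hgrad lstar) (by linarith : 0 ≤ b)
  have hsum : b * (b - 1) * ∑ i, ((lamhat (m + 1) i - lam m i) ^ 2 - (lam (m + 1) i - lam m i) ^ 2)
        / (2 * η i) + b * ∑ i, ((lamhat (m + 1) i - lstar i) ^ 2 - (lam (m + 1) i - lstar i) ^ 2)
        / (2 * η i)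
      = ∑ i, (t m * lam m i - (t m - 1) * lam (m - 1) i - lstar i) ^ 2 / (2 * η i)
        - ∑ i, (b * lam (m + 1) i - (b - 1) * lam m i - lstar i) ^ 2 / (2 * η i) := by
    rw [mul_sum, mul_sum, ← sum_add_distrib, ← sum_sub_distrib]
    refine sum_congr rfl fun i _ => ?_
    rw [show t m * lam m i - (t m - 1) * lam (m - 1) i - lstar i
        = b * lamhat (m + 1) i - (b - 1) * lam m i - lstar i by linear_combination -hmom i]
    ring
  unfold accelEnergy
  rw [Nat.add_sub_cancel]
  linear_combination hprev + hstar + hsum + (q (lam m) - q lstar) * hb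

theorem accelEnergy_one_le (ht1 : t 1 = 1) (hinit : lamhat 1 = lam 0)
    (hgrad : q (lam 1) - q lstar ≤
      ∑ i, ((lamhat 1 i - lstar i) ^ 2 - (lam 1 i - lstar i) ^ 2) / (2 * η i)) :
    accelEnergy q lstar η t lam 1 ≤ ∑ i, (lam 0 i - lstar i) ^ 2 / (2 * η i) := by
  simp only [hinit, sub_div, sum_sub_distrib] at hgrad
  simp only [accelEnergy, ht1, one_pow, one_mul, sub_self, zero_mul, sub_zero]
  linarith

theorem sq_mul_sub_le_of_accelerated (hη : ∀ i, 0 ≤ η i) (ht1 : t 1 = 1)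
    (hrec : ∀ m, 1 ≤ m → t (m + 1) = nesterovStep (t m)) (hinit : lamhat 1 = lam 0)
    (hgrad : ∀ m, 1 ≤ m → ∀ z, q (lam m) - q z ≤
      ∑ i, ((lamhat m i - z i) ^ 2 - (lam m i - z i) ^ 2) / (2 * η i))
    (hmom : ∀ m, 1 ≤ m → ∀ i, t (m + 1) * lamhat (m + 1) i =
      t (m + 1) * lam m i + (t m - 1) * (lam m i - lam (m - 1) i))
    {k : ℕ} (hk : 1 ≤ k) :
    t k ^ 2 * (q (lam k) - q lstar) ≤ ∑ i, (lam 0 i - lstar i) ^ 2 / (2 * η i) := by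
  have hdecay : accelEnergy q lstar η t lam k ≤ accelEnergy q lstar η t lam 1 := by
    induction k, hk using Nat.le_induction with
    | base => exact le_rfl
    | succ m hm ih =>
      have hone : 1 ≤ t (m + 1) := by
        have := half_succ_le_of_nesterovStep ht1 hrec (Nat.le_add_left 1 m)
        push_cast at this
        linarith [(Nat.one_le_cast (α := ℝ)).2 hm]
      exact (accelEnergy_succ_le (hgrad (m + 1) (by omega)) (hrec m hm) hone (hmom m hm)).trans ih
  have hdist : 0 ≤ ∑ i, (t k * lam k i - (t k - 1) * lam (k - 1) i - lstar i) ^ 2 / (2 * η i) :=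
    sum_nonneg fun i _ => div_nonneg (sq_nonneg _) (by linarith [hη i])
  have hbound := hdecay.trans (accelEnergy_one_le ht1 hinit (hgrad 1 le_rfl lstar))
  unfold accelEnergy at hbound
  linarith

theorem le_sum_div_sq_of_half_le {d : ι → ℝ} {k : ℕ} {τ δ : ℝ} (hk : 1 ≤ k)
    (hτ : ((k : ℝ) + 1) / 2 ≤ τ) (hδ : 0 ≤ δ) (h : τ ^ 2 * δ ≤ ∑ i, d i ^ 2 / (2 * η i)) :
    δ ≤ ∑ i, 2 * d i ^ 2 / (η i * (k : ℝ) ^ 2) := by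
  have hkR : (1 : ℝ) ≤ k := by exact_mod_cast hk
  have hτk : (k : ℝ) ^ 2 / 4 ≤ τ ^ 2 := by nlinarith
  have hsum : ∑ i, 2 * d i ^ 2 / (η i * (k : ℝ) ^ 2)
      = 4 / (k : ℝ) ^ 2 * ∑ i, d i ^ 2 / (2 * η i) := by
    rw [mul_sum]
    exact sum_congr rfl fun i _ => by ring
  rw [hsum, div_mul_eq_mul_div, le_div_iff₀ (by positivity)]
  nlinarith

end Energy

/-- Theorem 1: convergence rate `O(1/k²)` of Nesterov's accelerated gradient
method with coordinate-wise step-sizes `η i ∈ (0, 1/L i]` applied to a convex differentiable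
function `q` whose gradient is coordinate-wise Lipschitz with constants `L i`. -/
theorem stmt_8 {n : ℕ}
    (q : EuclideanSpace ℝ (Fin n) → ℝ)
    (hconv : ConvexOn ℝ Set.univ q)
    (g : EuclideanSpace ℝ (Fin n) → EuclideanSpace ℝ (Fin n))
    (hg : ∀ z, HasGradientAt q (g z) z)
    (L η : Fin n → ℝ)
    (hLip : ∀ i, ∀ a b, |g a i - g b i| ≤ L i * |a i - b i|)
    (hη : ∀ i, η i ∈ Set.Ioc 0 (1 / L i))
    (lstar : EuclideanSpace ℝ (Fin n)) (hstar : ∀ z, q lstar ≤ q z)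
    (lam lamhat : ℕ → EuclideanSpace ℝ (Fin n))
    (γ : ℕ → ℝ) (hγ1 : γ 1 = 1)
    (hγ : ∀ k, 1 ≤ k →
      γ (k + 1) = ((k + 1 : ℝ) / 2) * (1 + Real.sqrt (1 + 4 * (γ k / k) ^ 2)))
    (hinit : lamhat 1 = lam 0)
    (hstep : ∀ k, 1 ≤ k → ∀ i, lam k i = lamhat k i - η i * g (lamhat k) i)
    (hextra : ∀ k, 1 ≤ k → lamhat (k + 1) =
      lam k + (((k + 1 : ℝ) * (γ k - k)) / (k * γ (k + 1))) • (lam k - lam (k - 1))) :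
    ∀ k, 1 ≤ k →
      q (lam k) - q lstar ≤ ∑ i, 2 * (lam 0 i - lstar i) ^ 2 / (η i * (k : ℝ) ^ 2) := by
  intro k hk
  set t : ℕ → ℝ := fun m => γ m / m
  have ht1 : t 1 = 1 := by simp [t, hγ1]
  have hrec : ∀ m, 1 ≤ m → t (m + 1) = nesterovStep (t m) := fun m hm => by
    simp only [t, hγ m hm, nesterovStep]
    push_cast
    field_simp
  have hgrow : ∀ m : ℕ, 1 ≤ m → ((m : ℝ) + 1) / 2 ≤ t m := fun m hm =>
    half_succ_le_of_nesterovStep ht1 hrec hm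
  have hmom : ∀ m, 1 ≤ m → ∀ i, t (m + 1) * lamhat (m + 1) i =
      t (m + 1) * lam m i + (t m - 1) * (lam m i - lam (m - 1) i) := fun m hm i => by
    have hγpos : 0 < γ (m + 1) := by rw [hγ m hm]; positivity
    simp only [hextra m hm, PiLp.add_apply, PiLp.smul_apply, PiLp.sub_apply, smul_eq_mul, t]
    push_cast
    field_simp
  have hrate := sq_mul_sub_le_of_accelerated (lstar := lstar) (fun i => (hη i).1.le) ht1 hrec
    hinit (fun m hm => sub_le_sum_of_coordinate_gradient_step hconv hg hLip hη (hstep m hm)) hmom hk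
  exact le_sum_div_sq_of_half_le hk (hgrow k hk) (sub_nonneg.2 (hstar _)) hrate
end

section
/- Strong convexity gradient monotonicity: if f is σ-strongly convex and differentiable on a convex set C, and x(λ), x(μ) are the maximizers over C of −f(x)+⟨λ,x⟩ and −f(x)+⟨μ,x⟩ respectively, then σ‖x(μ) − x(λ)‖² ≤ ⟨μ − λ, x(μ) − x(λ)⟩. -/
open scoped RealInnerProductSpace

/-- strong-convexity gradient monotonicity for argmax maps:
`σ‖x(μ) - x(λ)‖² ≤ ⟪μ - λ, x(μ) - x(λ)⟫`. -/
theorem stmt_12 {n : ℕ} (C : Set (EuclideanSpace ℝ (Fin n))) (hCne : C.Nonempty)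
    (hCcl : IsClosed C) (hCconv : Convex ℝ C)
    (f : EuclideanSpace ℝ (Fin n) → ℝ) (hf : Differentiable ℝ f)
    (σ : ℝ) (hσ : 0 < σ) (hsc : StrongConvexOn C σ f)
    (x : EuclideanSpace ℝ (Fin n) → EuclideanSpace ℝ (Fin n))
    (hmem : ∀ l, x l ∈ C)
    (hmax : ∀ l, IsMaxOn (fun z => -f z + ⟪l, z⟫) C (x l))
    (huniq : ∀ l z, z ∈ C → IsMaxOn (fun z' => -f z' + ⟪l, z'⟫) C z → z = x l) :
    ∀ l m, σ * ‖x m - x l‖ ^ 2 ≤ ⟪m - l, x m - x l⟫ := by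
  have key : ∀ l y, y ∈ C →
      σ / 2 * ‖x l - y‖ ^ 2 ≤ (f y - ⟪l, y⟫) - (f (x l) - ⟪l, x l⟫) := by
    intro l y hy
    set c : ℝ := σ / 2 * ‖x l - y‖ ^ 2 with hc
    set d : ℝ := (f y - ⟪l, y⟫) - (f (x l) - ⟪l, x l⟫) with hd
    have hstep : ∀ t : ℝ, 0 < t → t < 1 → t * c ≤ d := by
      intro t ht0 ht1
      have hb0 : (0:ℝ) ≤ 1 - t := by linarith
      have hcomb : t • x l + (1 - t) • y ∈ C := hCconv (hmem l) hy ht0.le hb0 (by ring)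
      have hconv := hsc.2 (hmem l) hy ht0.le hb0 (by ring)
      have hopt := hmax l hcomb
      simp only [Set.mem_setOf_eq] at hopt
      have hinner : ⟪l, t • x l + (1 - t) • y⟫ = t * ⟪l, x l⟫ + (1 - t) * ⟪l, y⟫ := by
        rw [inner_add_right, real_inner_smul_right, real_inner_smul_right]
      have h1 : f (x l) - ⟪l, x l⟫ ≤ f (t • x l + (1 - t) • y) - ⟪l, t • x l + (1 - t) • y⟫ := by
        linarith [hopt]
      rw [hinner] at h1
      simp only [smul_eq_mul] at hconv
      rw [show σ / 2 * ‖x l - y‖ ^ 2 = c from hc.symm] at hconv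
      have h2 : (1 - t) * (f (x l) - ⟪l, x l⟫) ≤ (1 - t) * (f y - ⟪l, y⟫) - t * (1 - t) * c := by
        nlinarith [h1, hconv]
      have ht1' : (0:ℝ) < 1 - t := by linarith
      nlinarith [h2, ht1']
    have hc0 : 0 ≤ c := by positivity
    by_contra hcon
    push_neg at hcon
    have hd0 : 0 ≤ d := le_trans (by nlinarith [hstep (1/2) (by norm_num) (by norm_num)]) le_rfl
    have hcpos : 0 < c := lt_of_le_of_lt hd0 hcon
    have htlt : d / c < 1 := (div_lt_one hcpos).2 hcon
    set t : ℝ := (d / c + 1) / 2 with htdef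
    have htpos : 0 < t := by positivity
    have ht1 : t < 1 := by
      rw [htdef]; linarith
    have := hstep t htpos ht1
    have : t * c > d := by
      rw [htdef]
      have : d / c * c = d := div_mul_cancel₀ d hcpos.ne'
      nlinarith
    linarith [hstep t htpos ht1]
  intro l m
  have h1 := key l (x m) (hmem m)
  have h2 := key m (x l) (hmem l)
  have hnorm : ‖x l - x m‖ = ‖x m - x l‖ := norm_sub_rev _ _
  rw [hnorm] at h1
  have hexp : ⟪m - l, x m - x l⟫ = ⟪m, x m⟫ - ⟪m, x l⟫ - ⟪l, x m⟫ + ⟪l, x l⟫ := by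
    rw [inner_sub_left, inner_sub_right, inner_sub_right]; ring
  rw [hexp]
  linarith
end

section
/- The sequence γ^k defined by γ¹ = 1 and γ^{k+1} = ((k+1)/2)(1 + √(1 + 4(γ^k/k)²)) is strictly increasing and satisfies γ^k ≥ k for all k ≥ 1, hence the momentum coefficient (k+1)(γ^k − k)/(k γ^{k+1}) in the accelerated scheme is nonnegative. -/
/-- the Nesterov sequence `γ¹ = 1`,
`γ^{k+1} = ((k+1)/2)(1 + √(1 + 4(γ^k/k)²))` is strictly increasing, satisfies `γ^k ≥ k`,
and hence the momentum coefficient `(k+1)(γ^k - k)/(k γ^{k+1})` is nonnegative. -/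
theorem stmt_18 (γ : ℕ → ℝ) (h1 : γ 1 = 1)
    (hrec : ∀ k : ℕ, 1 ≤ k →
      γ (k + 1) = ((k + 1 : ℝ) / 2) * (1 + Real.sqrt (1 + 4 * (γ k / k) ^ 2))) :
    (∀ k : ℕ, 1 ≤ k → γ k < γ (k + 1)) ∧ (∀ k : ℕ, 1 ≤ k → (k : ℝ) ≤ γ k) ∧
      ∀ k : ℕ, 1 ≤ k → 0 ≤ ((k + 1 : ℝ) * (γ k - (k : ℝ))) / ((k : ℝ) * γ (k + 1)) := by
  have hge : ∀ k : ℕ, 1 ≤ k → (k : ℝ) ≤ γ k := by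
    intro k hk
    induction k, hk using Nat.le_induction with
    | base => simp [h1]
    | succ n hn ih =>
      rw [hrec n hn]
      have h2 : (1:ℝ) ≤ Real.sqrt (1 + 4 * (γ n / n)^2) := by
        nth_rewrite 1 [show (1:ℝ) = Real.sqrt 1 by simp]
        exact Real.sqrt_le_sqrt (by nlinarith [sq_nonneg (γ n / (n:ℝ))])
      have hn0 : (0:ℝ) < (n:ℝ) + 1 := by positivity
      push_cast
      nlinarith
  have hmono : ∀ k : ℕ, 1 ≤ k → γ k < γ (k + 1) := by
    intro k hk
    rw [hrec k hk]
    have hk0 : (0:ℝ) < (k:ℝ) := by exact_mod_cast hk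
    have hγ : (k:ℝ) ≤ γ k := hge k hk
    have hγ0 : (0:ℝ) < γ k := lt_of_lt_of_le hk0 hγ
    have h2 : 2 * (γ k / k) ≤ Real.sqrt (1 + 4 * (γ k / k)^2) := by
      rw [show 2 * (γ k / (k:ℝ)) = Real.sqrt ((2 * (γ k / k))^2) from ?_]
      · apply Real.sqrt_le_sqrt; nlinarith
      · rw [Real.sqrt_sq (by positivity)]
    have h3 := mul_le_mul_of_nonneg_left h2 (by positivity : (0:ℝ) ≤ ((k:ℝ)+1)/2)
    have hdiv : γ k / (k:ℝ) * k = γ k := div_mul_cancel₀ _ (ne_of_gt hk0)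
    nlinarith
  refine ⟨hmono, hge, fun k hk => ?_⟩
  have hk0 : (0:ℝ) < (k:ℝ) := by exact_mod_cast hk
  have h1' : (0:ℝ) < γ (k+1) := by
    have := hge (k+1) (by omega)
    push_cast at this
    linarith
  apply div_nonneg
  · nlinarith [hge k hk]
  · positivity
end

section
/- If f: ℝ → ℝ is σ-strongly convex, g: ℝ → ℝ is τ-strongly convex (σ, τ > 0), and q(λ) = max_{x ∈ I}(−f(x) + λx) + max_{y ∈ J}(−g(y) − λy) over compact intervals I, J, then q is convex with ((σ+τ)/(στ))-Lipschitz derivative q'(λ) = x(λ) − y(λ), where x(λ), y(λ) are the respective maximizers. -/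
open Set Filter

/-- Quadratic growth at a minimizer of a strongly convex function. -/
private lemma growth_aux {s : Set ℝ} (hs : Convex ℝ s) {σ : ℝ} (hσ : 0 < σ)
    {F : ℝ → ℝ}
    (hF : ∀ a ∈ s, ∀ b ∈ s, ∀ t ∈ Set.Ioo (0:ℝ) 1,
      F ((1-t)*a + t*b) ≤ (1-t)*F a + t*F b - (1-t)*t*(σ/2*(a-b)^2))
    {x₀ : ℝ} (hx₀ : x₀ ∈ s) (hmin : ∀ z ∈ s, F x₀ ≤ F z) :
    ∀ z ∈ s, F x₀ + σ/2*(x₀-z)^2 ≤ F z := by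
  intro z hz
  have hc0 : (0:ℝ) ≤ σ/2*(x₀-z)^2 := by positivity
  set c : ℝ := σ/2*(x₀-z)^2 with hc
  have key : ∀ t ∈ Set.Ioo (0:ℝ) 1, F x₀ + (1-t)*c ≤ F z := by
    intro t ht
    have hw : (1-t)*x₀ + t*z ∈ s := by
      have := hs hx₀ hz (by linarith [ht.2] : (0:ℝ) ≤ 1 - t) (le_of_lt ht.1) (by ring)
      simpa [smul_eq_mul] using this
    have h1 := hF x₀ hx₀ z hz t ht
    rw [← hc] at h1
    have h2 := hmin _ hw
    nlinarith [ht.1, ht.2, mul_pos ht.1 (sub_pos.mpr ht.2)]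
  rcases eq_or_lt_of_le hc0 with h0 | hcpos
  · have := hmin z hz
    rw [← h0]
    linarith
  · by_contra hcon
    push_neg at hcon
    set t : ℝ := min (1/2) ((F x₀ + c - F z)/(2*c)) with hT
    have hD : 0 < F x₀ + c - F z := by linarith
    have ht1 : 0 < t := lt_min (by norm_num) (by positivity)
    have ht2 : t < 1 := lt_of_le_of_lt (min_le_left _ _) (by norm_num)
    have h3 := key t ⟨ht1, ht2⟩
    have h4 : t * c ≤ (F x₀ + c - F z)/2 := by
      have : t ≤ (F x₀ + c - F z)/(2*c) := min_le_right _ _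
      calc t * c ≤ ((F x₀ + c - F z)/(2*c)) * c := by
            exact mul_le_mul_of_nonneg_right this hc0
        _ = (F x₀ + c - F z)/2 := by field_simp
    linarith

/-- The maximizer of `z ↦ -f z + l z` over a convex set is `1/σ`-Lipschitz in `l`
when `f` is `σ`-strongly convex. -/
private lemma max_lip {f : ℝ → ℝ} {σ p₁ p₂ : ℝ} (hσ : 0 < σ)
    (hsc : StrongConvexOn (Set.Icc p₁ p₂) σ f)
    {x : ℝ → ℝ} (hmem : ∀ l, x l ∈ Set.Icc p₁ p₂)
    (hmax : ∀ l, IsMaxOn (fun z => -f z + l * z) (Set.Icc p₁ p₂) (x l))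
    (l m : ℝ) : σ * |x l - x m| ≤ |l - m| := by
  have hconv : Convex ℝ (Set.Icc p₁ p₂) := convex_Icc _ _
  -- growth inequality for F_l z = f z - l z
  have G : ∀ l : ℝ, ∀ z ∈ Set.Icc p₁ p₂,
      (f (x l) - l * x l) + σ/2*(x l - z)^2 ≤ f z - l * z := by
    intro l
    refine growth_aux hconv hσ (F := fun z => f z - l * z) ?_ (hmem l) ?_
    · intro a ha b hb t ht
      have h := hsc.2 ha hb (show (0:ℝ) ≤ 1 - t by linarith [ht.2]) (le_of_lt ht.1)
        (show (1 - t) + t = 1 by ring)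
      simp only [smul_eq_mul, Real.norm_eq_abs] at h
      rw [sq_abs] at h
      linarith
    · intro z hz
      have := hmax l hz
      simp only [Set.mem_setOf_eq] at this
      linarith
  have G1 := G l (x m) (hmem m)
  have G2 := G m (x l) (hmem l)
  -- σ (x l - x m)^2 ≤ (l - m)(x l - x m)
  have hkey : σ * (x l - x m)^2 ≤ (l - m) * (x l - x m) := by nlinarith
  rcases eq_or_ne (x l) (x m) with h | h
  · simp [h, abs_nonneg]
  · have hd : 0 < |x l - x m| := abs_pos.mpr (sub_ne_zero.mpr h)
    have h1 : (l - m) * (x l - x m) ≤ |l - m| * |x l - x m| := by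
      calc (l - m) * (x l - x m) ≤ |(l - m) * (x l - x m)| := le_abs_self _
        _ = |l - m| * |x l - x m| := abs_mul _ _
    have h2 : σ * |x l - x m| * |x l - x m| ≤ |l - m| * |x l - x m| := by
      have : |x l - x m| * |x l - x m| = (x l - x m)^2 := by
        rw [← abs_mul, abs_mul_self]; ring
      nlinarith
    exact le_of_mul_le_mul_right h2 hd

/-- for `σ`-strongly convex `f` and `τ`-strongly convex `g` on ℝ and compact
intervals `I = [p₁, p₂]`, `J = [r₁, r₂]`, the bilateral dual
`q(λ) = max_{x ∈ I}(-f x + λx) + max_{y ∈ J}(-g y - λy)` is convex with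
`((σ+τ)/(στ))`-Lipschitz derivative `q'(λ) = x(λ) - y(λ)`. -/
theorem stmt_19 (f g : ℝ → ℝ) (hf : Differentiable ℝ f) (hg : Differentiable ℝ g)
    (σ τ : ℝ) (hσ : 0 < σ) (hτ : 0 < τ)
    (p₁ p₂ r₁ r₂ : ℝ) (hp : p₁ ≤ p₂) (hr : r₁ ≤ r₂)
    (hfsc : StrongConvexOn (Set.Icc p₁ p₂) σ f)
    (hgsc : StrongConvexOn (Set.Icc r₁ r₂) τ g)
    (x y : ℝ → ℝ)
    (hxmem : ∀ l, x l ∈ Set.Icc p₁ p₂) (hymem : ∀ l, y l ∈ Set.Icc r₁ r₂)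
    (hxmax : ∀ l, IsMaxOn (fun z => -f z + l * z) (Set.Icc p₁ p₂) (x l))
    (hymax : ∀ l, IsMaxOn (fun z => -g z - l * z) (Set.Icc r₁ r₂) (y l))
    (hxuniq : ∀ l z, z ∈ Set.Icc p₁ p₂ →
      IsMaxOn (fun z' => -f z' + l * z') (Set.Icc p₁ p₂) z → z = x l)
    (hyuniq : ∀ l z, z ∈ Set.Icc r₁ r₂ →
      IsMaxOn (fun z' => -g z' - l * z') (Set.Icc r₁ r₂) z → z = y l)
    (q : ℝ → ℝ)
    (hq : ∀ l, q l = (-f (x l) + l * x l) + (-g (y l) - l * y l)) :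
    ConvexOn ℝ Set.univ q ∧ (∀ l, HasDerivAt q (x l - y l) l) ∧
      ∀ l m, |(x l - y l) - (x m - y m)| ≤ ((σ + τ) / (σ * τ)) * |l - m| := by
  -- Lipschitz bounds on the maximizers
  have hxlip : ∀ l m, |x l - x m| ≤ |l - m| / σ := by
    intro l m
    have h := max_lip hσ hfsc hxmem hxmax l m
    rw [le_div_iff₀ hσ]
    linarith
  have hylip : ∀ l m, |y l - y m| ≤ |l - m| / τ := by
    intro l m
    have hmax' : ∀ l : ℝ, IsMaxOn (fun z => -g z + l * z) (Set.Icc r₁ r₂) (y (-l)) := by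
      intro l z hz
      have h := hymax (-l) hz
      simp only [Set.mem_setOf_eq] at h ⊢
      linarith
    have h := max_lip hτ hgsc (x := fun l => y (-l)) (fun l => hymem (-l)) hmax' (-l) (-m)
    simp only [neg_neg] at h
    have e : (-l) - (-m) = -(l - m) := by ring
    rw [e, abs_neg] at h
    rw [le_div_iff₀ hτ]
    linarith
  refine ⟨⟨convex_univ, ?_⟩, ?_, ?_⟩
  · -- convexity of q
    intro u _ v _ a b ha hb hab
    simp only [smul_eq_mul]
    rw [hq (a*u+b*v), hq u, hq v]
    have h1 := hxmax u (hxmem (a*u+b*v))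
    have h2 := hxmax v (hxmem (a*u+b*v))
    have h3 := hymax u (hymem (a*u+b*v))
    have h4 := hymax v (hymem (a*u+b*v))
    simp only [Set.mem_setOf_eq] at h1 h2 h3 h4
    have e : (-f (x (a*u+b*v)) + (a*u+b*v) * x (a*u+b*v))
          + (-g (y (a*u+b*v)) - (a*u+b*v) * y (a*u+b*v))
        = a*((-f (x (a*u+b*v)) + u * x (a*u+b*v)) + (-g (y (a*u+b*v)) - u * y (a*u+b*v)))
        + b*((-f (x (a*u+b*v)) + v * x (a*u+b*v)) + (-g (y (a*u+b*v)) - v * y (a*u+b*v))) := by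
      have hb' : b = 1 - a := by linarith
      subst hb'; ring
    rw [e]
    exact add_le_add (mul_le_mul_of_nonneg_left (add_le_add h1 h3) ha)
      (mul_le_mul_of_nonneg_left (add_le_add h2 h4) hb)
  · -- derivative
    intro l
    rw [hasDerivAt_iff_tendsto_slope]
    have bound : ∀ m : ℝ, m ≠ l →
        |slope q l m - (x l - y l)| ≤ ((σ + τ) / (σ * τ)) * |m - l| := by
      intro m hm
      have hml : m - l ≠ 0 := sub_ne_zero.mpr hm
      have hlm : l - m ≠ 0 := sub_ne_zero.mpr (Ne.symm hm)
      have hφ1 : (m - l) * x l ≤ (-f (x m) + m * x m) - (-f (x l) + l * x l) := by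
        have h := hxmax m (hxmem l)
        simp only [Set.mem_setOf_eq] at h
        nlinarith [h]
      have hφ2 : (-f (x m) + m * x m) - (-f (x l) + l * x l) ≤ (m - l) * x m := by
        have h := hxmax l (hxmem m)
        simp only [Set.mem_setOf_eq] at h
        nlinarith [h]
      have hψ1 : -((m - l) * y l) ≤ (-g (y m) - m * y m) - (-g (y l) - l * y l) := by
        have h := hymax m (hymem l)
        simp only [Set.mem_setOf_eq] at h
        nlinarith [h]
      have hψ2 : (-g (y m) - m * y m) - (-g (y l) - l * y l) ≤ -((m - l) * y m) := by
        have h := hymax l (hymem m)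
        simp only [Set.mem_setOf_eq] at h
        nlinarith [h]
      have A : |((-f (x m) + m * x m) - (-f (x l) + l * x l)) - (m - l) * x l|
          ≤ |m - l| * |x m - x l| := by
        rw [abs_le]
        constructor
        · have h0 : (0:ℝ) ≤ |m - l| * |x m - x l| :=
            mul_nonneg (abs_nonneg _) (abs_nonneg _)
          linarith
        · have h5 := le_abs_self ((m - l) * (x m - x l))
          rw [abs_mul] at h5
          nlinarith
      have B : |((-g (y m) - m * y m) - (-g (y l) - l * y l)) + (m - l) * y l|
          ≤ |m - l| * |y m - y l| := by
        rw [abs_le]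
        constructor
        · have h0 : (0:ℝ) ≤ |m - l| * |y m - y l| :=
            mul_nonneg (abs_nonneg _) (abs_nonneg _)
          linarith
        · have h5 := le_abs_self ((m - l) * (y l - y m))
          rw [abs_mul, abs_sub_comm (y l) (y m)] at h5
          nlinarith
      have hA' := hxlip m l
      have hB' := hylip m l
      have hnum : |q m - q l - (m - l) * (x l - y l)|
          ≤ ((σ + τ) / (σ * τ)) * (|m - l| * |m - l|) := by
        have e : q m - q l - (m - l) * (x l - y l)
            = (((-f (x m) + m * x m) - (-f (x l) + l * x l)) - (m - l) * x l)
            + (((-g (y m) - m * y m) - (-g (y l) - l * y l)) + (m - l) * y l) := by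
          rw [hq m, hq l]; ring
        rw [e]
        have h6 := (abs_add_le _ _).trans (add_le_add A B)
        have h7 : |m - l| * |x m - x l| ≤ |m - l| * (|m - l| / σ) :=
          mul_le_mul_of_nonneg_left hA' (abs_nonneg _)
        have h8 : |m - l| * |y m - y l| ≤ |m - l| * (|m - l| / τ) :=
          mul_le_mul_of_nonneg_left hB' (abs_nonneg _)
        have e2 : |m - l| * (|m - l| / σ) + |m - l| * (|m - l| / τ)
            = ((σ + τ) / (σ * τ)) * (|m - l| * |m - l|) := by
          field_simp; ring
        linarith
      have e3 : slope q l m - (x l - y l)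
          = (q m - q l - (m - l) * (x l - y l)) / (m - l) := by
        rw [slope_def_field]
        field_simp
      rw [e3, abs_div]
      rw [div_le_iff₀ (abs_pos.mpr hml)]
      calc |q m - q l - (m - l) * (x l - y l)|
          ≤ ((σ + τ) / (σ * τ)) * (|m - l| * |m - l|) := hnum
        _ = (σ + τ) / (σ * τ) * |m - l| * |m - l| := by ring
    have t1 : Filter.Tendsto (fun m : ℝ => ((σ + τ) / (σ * τ)) * |m - l|)
        (nhds l) (nhds 0) := by
      have hcont : Continuous fun m : ℝ => ((σ + τ) / (σ * τ)) * |m - l| :=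
        continuous_const.mul ((continuous_id.sub continuous_const).abs)
      have := hcont.tendsto l
      simpa using this
    have t2 : Filter.Tendsto (fun m : ℝ => |slope q l m - (x l - y l)|)
        (nhdsWithin l {l}ᶜ) (nhds 0) := by
      apply squeeze_zero' ?_ ?_ (t1.mono_left nhdsWithin_le_nhds)
      · filter_upwards with m using abs_nonneg _
      · filter_upwards [self_mem_nhdsWithin] with m hm using bound m hm
    have t3 : Filter.Tendsto (fun m : ℝ => slope q l m - (x l - y l))
        (nhdsWithin l {l}ᶜ) (nhds 0) := by
      rwa [tendsto_zero_iff_abs_tendsto_zero]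
    have t4 := t3.add (tendsto_const_nhds (x := x l - y l))
    simpa using t4
  · -- Lipschitz derivative
    intro l m
    have h1 := hxlip l m
    have h2 := hylip l m
    have e1 : |(x l - y l) - (x m - y m)| = |(x l - x m) + -(y l - y m)| := by
      congr 1; ring
    have h3 := abs_add_le (x l - x m) (-(y l - y m))
    rw [abs_neg] at h3
    have e2 : |l - m| / σ + |l - m| / τ = ((σ + τ) / (σ * τ)) * |l - m| := by
      field_simp; ring
    rw [e1]
    linarith
end
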